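/- arXiv:1909.05513 — 2 statements merged into one kernel-verified Lean document; each statement's English description precedes it below -/
import Mathlib

section
/- Let (X,d) be a metric space and f : X → ℝ a bounded continuous function with sup f ≤ 1. Define Sf(y) := inf_{x ∈ X_f} { 1 − cos²(d_{π/2}(x,y)) / (1 − f(x)) } if the open ball B_y(π/2) ⊆ X_f, and Sf(y) := −∞ otherwise, where X_f := {x : f(x) < 1} and d_{π/2} := min(d, π/2). Then Sf is upper semi-continuous. -/
/-!
On the closed set of points `y` with `B_y(π/2) ⊆ X_f`, `Sf` is an infimum of functions continuous
in `y`, hence upper semicontinuous; off it `Sf = −∞`, and that set is open because a witness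
`x ∈ B_y(π/2) \ X_f` stays in `B_{y'}(π/2)` for `y'` close to `y`.
-/

open Real Classical

/-- The `S`-transform of `f`: `Sf(y) = inf_{x ∈ X_f} (1 − cos²(d_{π/2}(x,y))/(1−f(x)))`
if the open ball `B_y(π/2)` is contained in `X_f = {f < 1}`, and `−∞` otherwise. -/
noncomputable def Stransform {X : Type*} [MetricSpace X] (f : X → ℝ) (y : X) : EReal :=
  if Metric.ball y (π / 2) ⊆ {x | f x < 1} then
    ⨅ x : {x : X // f x < 1},
      ((1 - Real.cos (min (dist (x : X) y) (π / 2)) ^ 2 / (1 - f (x : X)) : ℝ) : EReal)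
  else ⊥

theorem Metric.isClosed_setOf_ball_subset {X : Type*} [PseudoMetricSpace X] (r : ℝ) (s : Set X) :
    IsClosed {y | Metric.ball y r ⊆ s} := by
  have hcompl : {y | Metric.ball y r ⊆ s}ᶜ = ⋃ x ∈ sᶜ, Metric.ball x r := by
    ext y
    simp [Set.not_subset, Metric.mem_ball, dist_comm, and_comm]
  rw [← isOpen_compl_iff, hcompl]
  exact isOpen_biUnion fun x _ => Metric.isOpen_ball

theorem UpperSemicontinuous.ite_bot {α β : Type*} [TopologicalSpace α] [Preorder β] [OrderBot β]
    {p : α → Prop} [DecidablePred p] {g : α → β}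
    (hg : UpperSemicontinuous g) (hp : IsClosed {y | p y}) :
    UpperSemicontinuous fun y => if p y then g y else ⊥ := by
  intro y c hc
  dsimp only at hc ⊢
  by_cases hy : p y
  · rw [if_pos hy] at hc
    filter_upwards [hg y c hc] with y' hy'
    split_ifs
    exacts [hy', bot_le.trans_lt hc]
  · rw [if_neg hy] at hc
    filter_upwards [hp.isOpen_compl.mem_nhds hy] with y' (hy' : ¬p y')
    rwa [if_neg hy']

theorem Stransform_upperSemicontinuous_general {X : Type*} [MetricSpace X]
    (f : X → ℝ) :
    UpperSemicontinuous (Stransform f) := by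
  have hinf : UpperSemicontinuous fun y : X => ⨅ x : {x : X // f x < 1},
      ((1 - Real.cos (min (dist (x : X) y) (π / 2)) ^ 2 / (1 - f (x : X)) : ℝ) : EReal) :=
    upperSemicontinuous_iInf fun x =>
      (continuous_coe_real_ereal.comp (by fun_prop)).upperSemicontinuous
  exact hinf.ite_bot (Metric.isClosed_setOf_ball_subset _ _)

theorem Stransform_upperSemicontinuous {X : Type*} [MetricSpace X]
    (f : X → ℝ) (hc : Continuous f) (hb : ∃ C, ∀ x, |f x| ≤ C)
    (h1 : ∀ x, f x ≤ 1) :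
    UpperSemicontinuous (Stransform f) :=
  Stransform_upperSemicontinuous_general f
end

section
/- Let (Y,d) be an NPC space (complete and for every x₁,x₂ there exists y with d²(z,y) ≤ ½d²(z,x₁) + ½d²(z,x₂) − ¼d²(x₁,x₂) for all z). Then for any k points y₁,…,y_k and weights λᵢ ≥ 0 with ∑λᵢ = 1, the functional y ↦ ∑ᵢ λᵢ d²(y,yᵢ) has a unique minimizer. -/
/-!
Averaging the NPC inequality with the weights `lᵢ` shows that `F y = ∑ lᵢ d²(y, yᵢ)` has, for
any `x₁, x₂`, a point `p` with `F p ≤ ½ F x₁ + ½ F x₂ - ¼ d²(x₁, x₂)`. Since `F p ≥ m := inf F`,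
this gives `d²(x₁, x₂) ≤ 2 (F x₁ - m) + 2 (F x₂ - m)`: minimizing sequences are Cauchy, their
limit is a minimizer by completeness and continuity, and two minimizers are at distance `0`.
-/

open Filter Topology Set

def MidpointStronglyConvex {Y : Type*} [MetricSpace Y] (F : Y → ℝ) : Prop :=
  ∀ x₁ x₂ : Y, ∃ p, F p ≤ (1 / 2) * F x₁ + (1 / 2) * F x₂ - (1 / 4) * dist x₁ x₂ ^ 2

namespace MidpointStronglyConvex

variable {Y : Type*} [MetricSpace Y] {F : Y → ℝ}

theorem sq_dist_le (hF : MidpointStronglyConvex F) {m : ℝ} (hm : ∀ z, m ≤ F z) (x₁ x₂ : Y) :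
    dist x₁ x₂ ^ 2 ≤ 2 * (F x₁ - m) + 2 * (F x₂ - m) := by
  obtain ⟨p, hp⟩ := hF x₁ x₂
  linarith [hm p]

theorem cauchySeq_of_tendsto (hF : MidpointStronglyConvex F) {m : ℝ} (hm : ∀ z, m ≤ F z)
    {x : ℕ → Y} (hx : Tendsto (F ∘ x) atTop (𝓝 m)) : CauchySeq x := by
  rw [cauchySeq_iff_tendsto_dist_atTop_0]
  have hgap : Tendsto (fun n : ℕ × ℕ => 2 * (F (x n.1) - m) + 2 * (F (x n.2) - m))
      atTop (𝓝 0) := by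
    rw [← prod_atTop_atTop_eq]
    have h := (hx.sub_const m).const_mul 2
    simpa using (h.comp tendsto_fst).add (h.comp tendsto_snd)
  refine squeeze_zero (fun _ => dist_nonneg) (fun n => ?_) (by simpa using hgap.sqrt)
  exact Real.le_sqrt_of_sq_le (hF.sq_dist_le hm _ _)

theorem exists_forall_le [CompleteSpace Y] [Nonempty Y] (hF : MidpointStronglyConvex F)
    (hlsc : LowerSemicontinuous F) (hbdd : BddBelow (range F)) : ∃ z, ∀ w, F z ≤ F w := by
  set m := sInf (range F)
  have hm : ∀ z, m ≤ F z := fun z => csInf_le hbdd ⟨z, rfl⟩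
  obtain ⟨u, -, hu, hu_mem⟩ := exists_seq_tendsto_sInf (range_nonempty F) hbdd
  choose x hx using hu_mem
  have hFx : Tendsto (F ∘ x) atTop (𝓝 m) := by simpa [Function.comp_def, hx] using hu
  obtain ⟨z, hz⟩ := cauchySeq_tendsto_of_complete (hF.cauchySeq_of_tendsto hm hFx)
  refine ⟨z, fun w => le_trans ?_ (hm w)⟩
  by_contra! hlt
  have hbetween : (m + F z) / 2 < F z := by linarith
  have hev := hz.eventually (hlsc z _ hbetween)
  linarith [ge_of_tendsto hFx (hev.mono fun _ h => h.le)]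

theorem eq_of_forall_le (hF : MidpointStronglyConvex F) {z z' : Y} (hz : ∀ w, F z ≤ F w)
    (hz' : ∀ w, F z' ≤ F w) : z = z' := by
  have hsq := hF.sq_dist_le hz z z'
  have := hz' z
  exact dist_le_zero.mp (by nlinarith [dist_nonneg (x := z) (y := z')])

end MidpointStronglyConvex

theorem midpointStronglyConvex_sum_mul_sq_dist {Y : Type*} [MetricSpace Y]
    (hNPC : ∀ x₁ x₂ : Y, ∃ y : Y, ∀ z : Y,
      dist z y ^ 2 ≤ (1 / 2) * dist z x₁ ^ 2 + (1 / 2) * dist z x₂ ^ 2 -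
        (1 / 4) * dist x₁ x₂ ^ 2)
    {ι : Type*} [Fintype ι] (y : ι → Y) {l : ι → ℝ} (hl : ∀ i, 0 ≤ l i) (hsum : ∑ i, l i = 1) :
    MidpointStronglyConvex fun z => ∑ i, l i * dist z (y i) ^ 2 := by
  intro x₁ x₂
  obtain ⟨p, hp⟩ := hNPC x₁ x₂
  refine ⟨p, ?_⟩
  calc ∑ i, l i * dist p (y i) ^ 2
      ≤ ∑ i, l i * ((1 / 2) * dist x₁ (y i) ^ 2 + (1 / 2) * dist x₂ (y i) ^ 2 -
          (1 / 4) * dist x₁ x₂ ^ 2) := by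
        refine Finset.sum_le_sum fun i _ => mul_le_mul_of_nonneg_left ?_ (hl i)
        simpa only [dist_comm _ (y i)] using hp (y i)
    _ = _ := by
        simp only [mul_sub, mul_add, Finset.sum_sub_distrib, Finset.sum_add_distrib,
          mul_left_comm (l _), ← Finset.mul_sum, ← Finset.sum_mul, hsum, one_mul]

/-- In an NPC space (complete, with midpoints satisfying the NPC inequality), the weighted
sum of squared distances to finitely many points has a unique minimizer. -/
theorem npc_unique_barycenter {Y : Type*} [MetricSpace Y] [CompleteSpace Y]
    (hNPC : ∀ x₁ x₂ : Y, ∃ y : Y, ∀ z : Y,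
      dist z y ^ 2 ≤ (1 / 2) * dist z x₁ ^ 2 + (1 / 2) * dist z x₂ ^ 2 -
        (1 / 4) * dist x₁ x₂ ^ 2)
    (k : ℕ) (y : Fin k → Y) (l : Fin k → ℝ) (hl : ∀ i, 0 ≤ l i) (hsum : ∑ i, l i = 1) :
    ∃! z : Y, ∀ w : Y, ∑ i, l i * dist z (y i) ^ 2 ≤ ∑ i, l i * dist w (y i) ^ 2 := by
  have : Nonempty Y := by
    rcases k with _ | k
    · simp at hsum
    · exact ⟨y 0⟩
  have hF := midpointStronglyConvex_sum_mul_sq_dist hNPC y hl hsum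
  have hcont : Continuous fun z => ∑ i, l i * dist z (y i) ^ 2 := by fun_prop
  have hbdd : BddBelow (range fun z => ∑ i, l i * dist z (y i) ^ 2) :=
    ⟨0, by rintro _ ⟨z, rfl⟩; exact Finset.sum_nonneg fun i _ => mul_nonneg (hl i) (sq_nonneg _)⟩
  exact existsUnique_of_exists_of_unique (hF.exists_forall_le hcont.lowerSemicontinuous hbdd)
    fun _ _ => hF.eq_of_forall_le
end
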